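/- In C_n^q, for 1 ≤ i ≤ n-1: if i is odd then q z_i θ(z_{i-2}) - z_{i-1} θ(z_{i-1}) = -q^{(i-1)/2}, and if i is even then z_i θ(z_{i-2}) - z_{i-1} θ(z_{i-1}) = -q^{(i-2)/2}. -/
import Mathlib


noncomputable section

open FreeAlgebra

/-- Defining relations of the linear connected quantized Weyl algebra `L_n^q`
(generators indexed `0,…,n-1`, corresponding to `x_1,…,x_n`). -/
inductive LRel (K : Type) [Field K] (n : ℕ) (q : K) :
    FreeAlgebra K (Fin n) → FreeAlgebra K (Fin n) → Prop
  | adj (i j : Fin n) (h : j.1 = i.1 + 1) :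
      LRel K n q (ι K i * ι K j)
        (q • (ι K j * ι K i) + algebraMap K (FreeAlgebra K (Fin n)) (1 - q))
  | far_odd (i j : Fin n) (h : i.1 + 1 < j.1) (ho : Odd (j.1 - i.1)) :
      LRel K n q (ι K i * ι K j) (q • (ι K j * ι K i))
  | far_even (i j : Fin n) (h : i.1 + 1 < j.1) (he : Even (j.1 - i.1)) :
      LRel K n q (ι K i * ι K j) (q⁻¹ • (ι K j * ι K i))

/-- The linear connected quantized Weyl algebra `L_n^q`. -/
abbrev LWeyl (K : Type) [Field K] (n : ℕ) (q : K) := RingQuot (LRel K n q)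

/-- The generator `x_m` (1-based) of `L_n^q`. -/
def Lgen (K : Type) [Field K] (n : ℕ) (q : K) (m : ℕ) : LWeyl K n q :=
  if h : m - 1 < n then RingQuot.mkAlgHom K (LRel K n q) (ι K ⟨m - 1, h⟩) else 0

/-- Defining relations of the cyclic connected quantized Weyl algebra `C_n^q`. -/
inductive CRel (K : Type) [Field K] (n : ℕ) (q : K) :
    FreeAlgebra K (Fin n) → FreeAlgebra K (Fin n) → Prop
  | adj (i j : Fin n) (h : j.1 = i.1 + 1) :
      CRel K n q (ι K i * ι K j)
        (q • (ι K j * ι K i) + algebraMap K (FreeAlgebra K (Fin n)) (1 - q))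
  | cyc (i j : Fin n) (hi : i.1 = 0) (hj : j.1 = n - 1) :
      CRel K n q (ι K j * ι K i)
        (q • (ι K i * ι K j) + algebraMap K (FreeAlgebra K (Fin n)) (1 - q))
  | far_odd (i j : Fin n) (h : i.1 + 1 < j.1) (ho : Odd (j.1 - i.1)) :
      CRel K n q (ι K i * ι K j) (q • (ι K j * ι K i))
  | far_even (i j : Fin n) (h : i.1 + 1 < j.1) (hj : j.1 + 1 < n) (he : Even (j.1 - i.1)) :
      CRel K n q (ι K i * ι K j) (q⁻¹ • (ι K j * ι K i))

/-- The cyclic connected quantized Weyl algebra `C_n^q`. -/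
abbrev CWeyl (K : Type) [Field K] (n : ℕ) (q : K) := RingQuot (CRel K n q)

/-- The generator `x_m` (1-based) of `C_n^q`. -/
def Cgen (K : Type) [Field K] (n : ℕ) (q : K) (m : ℕ) : CWeyl K n q :=
  if h : m - 1 < n then RingQuot.mkAlgHom K (CRel K n q) (ι K ⟨m - 1, h⟩) else 0

/-- The shifted sequence of elements `z_{-1} = 0`, `z_0 = 1`, `z_i = z_{i-1} x_i - z_{i-2}`:
here `zsh x k = z_{k-1}`, where `x` is 1-based access to the generators. -/
def zsh {R : Type} [Ring R] (x : ℕ → R) : ℕ → R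
  | 0 => 0
  | 1 => 1
  | (k + 2) => zsh x (k + 1) * x (k + 1) - zsh x k

/-- The standard monomial `x_1^{a_1} ⋯ x_n^{a_n}`. -/
def stdMonomial {R : Type} [Ring R] (n : ℕ) (x : Fin n → R) (a : Fin n → ℕ) : R :=
  ((List.finRange n).map (fun i => x i ^ a i)).prod

/-- The family of standard monomials is a `K`-basis. -/
def IsMonBasis (K : Type) [Field K] {R : Type} [Ring R] [Algebra K R] (n : ℕ)
    (x : Fin n → R) : Prop :=
  LinearIndependent K (fun a : Fin n → ℕ => stdMonomial n x a) ∧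
    Submodule.span K (Set.range (fun a : Fin n → ℕ => stdMonomial n x a)) = ⊤

/-- A two-sided ideal is prime. -/
def IsTwoSidedPrime {R : Type} [Ring R] (P : TwoSidedIdeal R) : Prop :=
  P ≠ ⊤ ∧ ∀ a b : R, (∀ r : R, a * r * b ∈ P) → a ∈ P ∨ b ∈ P

/-- `q` is not a root of unity. -/
def NotRootOfUnity {K : Type} [Field K] (q : K) : Prop :=
  ∀ k : ℕ, 0 < k → q ^ k ≠ 1


section Aux
variable {K : Type} [Field K] {n : ℕ} {q : K}

private lemma Cgen_def (m : ℕ) (h : m - 1 < n) :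
    Cgen K n q m = RingQuot.mkAlgHom K (CRel K n q) (ι K ⟨m - 1, h⟩) := dif_pos h

private lemma rel_adj (a : ℕ) (h1 : 1 ≤ a) (h2 : a < n) :
    Cgen K n q a * Cgen K n q (a + 1) =
      q • (Cgen K n q (a + 1) * Cgen K n q a) + algebraMap K (CWeyl K n q) (1 - q) := by
  rw [Cgen_def a (by omega), Cgen_def (a + 1) (by omega)]
  have h := RingQuot.mkAlgHom_rel K
    (CRel.adj (K := K) (n := n) (q := q) ⟨a - 1, by omega⟩ ⟨a + 1 - 1, by omega⟩
      (by show a + 1 - 1 = a - 1 + 1; omega))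
  simpa [map_mul, map_add, map_smul] using h

private lemma rel_far_odd (a b : ℕ) (h1 : 1 ≤ a) (h2 : a + 1 < b) (h3 : b ≤ n)
    (ho : Odd (b - a)) :
    Cgen K n q a * Cgen K n q b = q • (Cgen K n q b * Cgen K n q a) := by
  rw [Cgen_def a (by omega), Cgen_def b (by omega)]
  have h := RingQuot.mkAlgHom_rel K
    (CRel.far_odd (K := K) (n := n) (q := q) ⟨a - 1, by omega⟩ ⟨b - 1, by omega⟩
      (by show a - 1 + 1 < b - 1; omega)
      (by show Odd (b - 1 - (a - 1)); rw [show b - 1 - (a-1) = b - a from by omega]; exact ho))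
  simpa [map_mul, map_smul] using h

private lemma rel_far_even (hq0 : q ≠ 0) (a b : ℕ) (h1 : 1 ≤ a) (h2 : a + 1 < b) (h3 : b < n)
    (he : Even (b - a)) :
    q • (Cgen K n q a * Cgen K n q b) = Cgen K n q b * Cgen K n q a := by
  rw [Cgen_def a (by omega), Cgen_def b (by omega)]
  have h := RingQuot.mkAlgHom_rel K
    (CRel.far_even (K := K) (n := n) (q := q) ⟨a - 1, by omega⟩ ⟨b - 1, by omega⟩
      (by show a - 1 + 1 < b - 1; omega) (by show b - 1 + 1 < n; omega)
      (by show Even (b - 1 - (a - 1)); rw [show b - 1 - (a-1) = b - a from by omega]; exact he))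
  rw [map_mul] at h
  rw [h, map_smul, map_mul, smul_smul, mul_inv_cancel₀ hq0, one_smul]

end Aux

section Aux2
variable {K : Type} [Field K] {n : ℕ} {q : K}

private lemma two_step {P : ℕ → Prop} (h0 : P 0) (h1 : P 1)
    (hs : ∀ j, P j → P (j + 1) → P (j + 2)) : ∀ j, P j := by
  have key : ∀ j, P j ∧ P (j + 1) := by
    intro j
    induction j with
    | zero => exact ⟨h0, h1⟩
    | succ k ih => exact ⟨ih.2, hs k ih.1 ih.2⟩
  exact fun j => (key j).1

private lemma lemB (hq0 : q ≠ 0) :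
    ∀ j : ℕ, ∀ m : ℕ, 2 ≤ m → j + m + 1 ≤ n →
      (Even j → Cgen K n q (j + m) * zsh (Cgen K n q) (j + 1)
          = zsh (Cgen K n q) (j + 1) * Cgen K n q (j + m)) ∧
      (Odd j → Odd m → zsh (Cgen K n q) (j + 1) * Cgen K n q (j + m)
          = q • (Cgen K n q (j + m) * zsh (Cgen K n q) (j + 1))) ∧
      (Odd j → Even m → Cgen K n q (j + m) * zsh (Cgen K n q) (j + 1)
          = q • (zsh (Cgen K n q) (j + 1) * Cgen K n q (j + m))) := by
  refine two_step ?_ ?_ ?_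
  · -- j = 0
    intro m hm hb
    have hz : zsh (Cgen K n q) (0 + 1) = 1 := rfl
    refine ⟨fun _ => by rw [hz, one_mul, mul_one], fun h _ => ?_, fun h _ => ?_⟩ <;>
      · rw [Nat.odd_iff] at h; omega
  · -- j = 1
    intro m hm hb
    have hz : zsh (Cgen K n q) (1 + 1) = Cgen K n q 1 := by
      show (1 : CWeyl K n q) * Cgen K n q 1 - 0 = _; rw [one_mul, sub_zero]
    refine ⟨fun h => ?_, fun _ hmo => ?_, fun _ hme => ?_⟩
    · rw [Nat.even_iff] at h; omega
    · rw [hz]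
      exact rel_far_odd 1 (1 + m) (by omega) (by omega) (by omega)
        (by rw [show 1 + m - 1 = m from by omega]; exact hmo)
    · rw [hz]
      exact (rel_far_even hq0 1 (1 + m) (by omega) (by omega) (by omega)
        (by rw [show 1 + m - 1 = m from by omega]; exact hme)).symm
  · -- step
    intro j ih0 ih1 m hm hb
    -- abbreviations
    set U := zsh (Cgen K n q) (j + 2) with hU
    set V := zsh (Cgen K n q) (j + 1) with hV
    set Y := Cgen K n q (j + 2) with hY
    set B := Cgen K n q (j + 2 + m) with hB
    have hz3 : zsh (Cgen K n q) (j + 2 + 1) = U * Y - V := rfl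
    obtain ⟨A1, A2, A3⟩ := ih1 (m + 1) (by omega) (by omega)
    rw [show j + 1 + (m + 1) = j + 2 + m from by omega,
        show j + 1 + 1 = j + 2 from rfl] at A1 A2 A3
    obtain ⟨C1, C2, C3⟩ := ih0 (m + 2) (by omega) (by omega)
    rw [show j + (m + 2) = j + 2 + m from by omega] at C1 C2 C3
    rw [hz3]
    rcases Nat.even_or_odd j with hj | hj
    · -- j even : j+2 even; only first component nontrivial
      refine ⟨fun _ => ?_, fun h _ => ?_, fun h _ => ?_⟩
      · -- B * (U*Y - V) = (U*Y - V) * B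
        have hC : B * V = V * B := C1 hj
        have hkey : B * (U * Y) = U * Y * B := by
          rcases Nat.even_or_odd m with hme | hmo
          · -- m even: A2 (odd j+1, odd m+1): U * B = q • (B * U)
            have h1 : U * B = q • (B * U) := A2 (by simp [Nat.odd_iff, Nat.even_iff] at hj ⊢; omega)
              (by simp [Nat.odd_iff, Nat.even_iff] at hme ⊢; omega)
            have h2 : q • (Y * B) = B * Y := rel_far_even hq0 (j+2) (j+2+m) (by omega) (by omega)
              (by omega) (by rw [show j+2+m - (j+2) = m from by omega]; exact hme)
            -- B*U = q⁻¹ • (U*B)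
            have h1' : B * U = q⁻¹ • (U * B) := by
              rw [h1, smul_smul, inv_mul_cancel₀ hq0, one_smul]
            calc B * (U * Y) = (B * U) * Y := by rw [mul_assoc]
              _ = q⁻¹ • (U * (B * Y)) := by rw [h1', smul_mul_assoc, mul_assoc]
              _ = q⁻¹ • (U * (q • (Y * B))) := by rw [h2]
              _ = (q⁻¹ * q) • (U * (Y * B)) := by rw [mul_smul_comm, smul_smul]
              _ = U * Y * B := by rw [inv_mul_cancel₀ hq0, one_smul, mul_assoc]
          · -- m odd: A3 (odd j+1, even m+1): B * U = q • (U * B)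
            have h1 : B * U = q • (U * B) := A3 (by simp [Nat.odd_iff, Nat.even_iff] at hj ⊢; omega)
              (by simp [Nat.odd_iff, Nat.even_iff] at hmo ⊢; omega)
            have h2 : Y * B = q • (B * Y) := rel_far_odd (j+2) (j+2+m) (by omega) (by omega)
              (by omega) (by rw [show j+2+m - (j+2) = m from by omega]; exact hmo)
            have h2' : B * Y = q⁻¹ • (Y * B) := by
              rw [h2, smul_smul, inv_mul_cancel₀ hq0, one_smul]
            calc B * (U * Y) = (B * U) * Y := by rw [mul_assoc]
              _ = q • (U * (B * Y)) := by rw [h1, smul_mul_assoc, mul_assoc]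
              _ = q • (U * (q⁻¹ • (Y * B))) := by rw [h2']
              _ = (q * q⁻¹) • (U * (Y * B)) := by rw [mul_smul_comm, smul_smul]
              _ = U * Y * B := by rw [mul_inv_cancel₀ hq0, one_smul, mul_assoc]
        rw [mul_sub, sub_mul, hkey, hC]
      · rw [Nat.odd_iff] at h; rw [Nat.even_iff] at hj; omega
      · rw [Nat.odd_iff] at h; rw [Nat.even_iff] at hj; omega
    · -- j odd : j+2 odd
      have hA1 : B * U = U * B := A1 (by simp [Nat.odd_iff, Nat.even_iff] at hj ⊢; omega)
      refine ⟨fun h => ?_, fun _ hmo => ?_, fun _ hme => ?_⟩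
      · rw [Nat.even_iff] at h; rw [Nat.odd_iff] at hj; omega
      · -- m odd: (U*Y - V) * B = q • (B * (U*Y - V))
        have hC : V * B = q • (B * V) := C2 hj (by rw [Nat.odd_iff] at hmo ⊢; omega)
        have h2 : Y * B = q • (B * Y) := rel_far_odd (j+2) (j+2+m) (by omega) (by omega)
          (by omega) (by rw [show j+2+m - (j+2) = m from by omega]; exact hmo)
        have hkey : (U * Y) * B = q • (B * (U * Y)) := by
          calc (U * Y) * B = U * (Y * B) := by rw [mul_assoc]
            _ = q • (U * (B * Y)) := by rw [h2, mul_smul_comm]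
            _ = q • ((U * B) * Y) := by rw [mul_assoc]
            _ = q • (B * (U * Y)) := by rw [← hA1, mul_assoc]
        rw [sub_mul, mul_sub, hkey, hC, smul_sub]
      · -- m even: B * (U*Y - V) = q • ((U*Y - V) * B)
        have hC : B * V = q • (V * B) := C3 hj (by rw [Nat.even_iff] at hme ⊢; omega)
        have h2 : q • (Y * B) = B * Y := rel_far_even hq0 (j+2) (j+2+m) (by omega) (by omega)
          (by omega) (by rw [show j+2+m - (j+2) = m from by omega]; exact hme)
        have hkey : B * (U * Y) = q • ((U * Y) * B) := by
          calc B * (U * Y) = (B * U) * Y := by rw [mul_assoc]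
            _ = U * (B * Y) := by rw [hA1, mul_assoc]
            _ = U * (q • (Y * B)) := by rw [h2]
            _ = q • (U * Y * B) := by rw [mul_smul_comm, mul_assoc]
        rw [mul_sub, sub_mul, hkey, hC, smul_sub]


private lemma lemA (hq0 : q ≠ 0) :
    ∀ j : ℕ, j + 2 ≤ n →
      (Even j → Cgen K n q (j + 1) * zsh (Cgen K n q) (j + 1) =
          zsh (Cgen K n q) (j + 1) * Cgen K n q (j + 1) - (1 - q) • zsh (Cgen K n q) j) ∧
      (Odd j → q • (Cgen K n q (j + 1) * zsh (Cgen K n q) (j + 1)) =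
          zsh (Cgen K n q) (j + 1) * Cgen K n q (j + 1) - (1 - q) • zsh (Cgen K n q) j) := by
  intro j hj
  match j, hj with
  | 0, hj =>
    refine ⟨fun _ => ?_, fun h => by rw [Nat.odd_iff] at h; omega⟩
    show Cgen K n q 1 * 1 = 1 * Cgen K n q 1 - (1 - q) • (0 : CWeyl K n q)
    rw [mul_one, one_mul, smul_zero, sub_zero]
  | 1, hj =>
    refine ⟨fun h => by rw [Nat.even_iff] at h; omega, fun _ => ?_⟩
    have hz2 : zsh (Cgen K n q) (1 + 1) = Cgen K n q 1 := by
      show (1 : CWeyl K n q) * Cgen K n q 1 - 0 = _; rw [one_mul, sub_zero]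
    have hz1 : zsh (Cgen K n q) 1 = 1 := rfl
    have h := rel_adj (K := K) (n := n) (q := q) 1 (by omega) (by omega)
    rw [Algebra.algebraMap_eq_smul_one] at h
    rw [hz2, hz1, eq_sub_iff_add_eq, ← h]
  | (j + 2), hj =>
    set U := zsh (Cgen K n q) (j + 2) with hU
    set V := zsh (Cgen K n q) (j + 1) with hV
    set Y := Cgen K n q (j + 2) with hY
    set X3 := Cgen K n q (j + 3) with hX3
    have hz3 : zsh (Cgen K n q) (j + 2 + 1) = U * Y - V := rfl
    obtain ⟨B1e, B1oo, B1oe⟩ := lemB (K := K) (n := n) (q := q) hq0 (j + 1) 2 (by omega) (by omega)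
    rw [show j + 1 + 2 = j + 3 from rfl, show j + 1 + 1 = j + 2 from rfl] at B1e B1oo B1oe
    obtain ⟨B0e, B0oo, B0oe⟩ := lemB (K := K) (n := n) (q := q) hq0 j 3 (by omega) (by omega)
    rw [show j + 3 = j + 3 from rfl] at B0e B0oo B0oe
    have adj := rel_adj (K := K) (n := n) (q := q) (j + 2) (by omega) (by omega)
    rw [show j + 2 + 1 = j + 3 from rfl, Algebra.algebraMap_eq_smul_one] at adj
    -- q • (X3 * Y) = Y * X3 - (1-q) • 1
    have adj' : q • (X3 * Y) = Y * X3 - (1 - q) • (1 : CWeyl K n q) := by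
      rw [eq_sub_iff_add_eq, ← adj]
    rw [show j + 2 + 1 = j + 3 from rfl] at hz3 ⊢
    constructor
    · -- Even (j+2), so Even j, Odd (j+1)
      intro hev
      have hje : Even j := by rw [Nat.even_iff] at hev ⊢; omega
      have hjo1 : Odd (j + 1) := by rw [Nat.odd_iff]; rw [Nat.even_iff] at hje; omega
      have h1 : X3 * U = q • (U * X3) := B1oe hjo1 (by decide)
      have h0 : X3 * V = V * X3 := B0e hje
      rw [hz3]
      have key : X3 * (U * Y) = U * (Y * X3) - (1 - q) • U := by
        calc X3 * (U * Y) = (X3 * U) * Y := by rw [mul_assoc]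
          _ = q • (U * (X3 * Y)) := by rw [h1, smul_mul_assoc, mul_assoc]
          _ = U * (q • (X3 * Y)) := by rw [mul_smul_comm]
          _ = U * (Y * X3 - (1 - q) • (1 : CWeyl K n q)) := by rw [adj']
          _ = U * (Y * X3) - (1 - q) • U := by
              rw [mul_sub, mul_smul_comm, mul_one]
      rw [mul_sub, sub_mul, key, h0, mul_assoc]
      module
    · -- Odd (j+2), so Odd j, Even (j+1)
      intro hod
      have hjo : Odd j := by rw [Nat.odd_iff] at hod ⊢; omega
      have hje1 : Even (j + 1) := by rw [Nat.even_iff]; rw [Nat.odd_iff] at hjo; omega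
      have h1 : X3 * U = U * X3 := B1e hje1
      have h0 : V * X3 = q • (X3 * V) := B0oo hjo (by decide)
      rw [hz3]
      have key : q • (X3 * (U * Y)) = U * (Y * X3) - (1 - q) • U := by
        calc q • (X3 * (U * Y)) = q • ((X3 * U) * Y) := by rw [mul_assoc]
          _ = q • (U * (X3 * Y)) := by rw [h1, mul_assoc]
          _ = U * (q • (X3 * Y)) := by rw [mul_smul_comm]
          _ = U * (Y * X3 - (1 - q) • (1 : CWeyl K n q)) := by rw [adj']
          _ = U * (Y * X3) - (1 - q) • U := by rw [mul_sub, mul_smul_comm, mul_one]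
      rw [mul_sub, smul_sub, key, ← h0, sub_mul, mul_assoc]
      module


private lemma main44 (hq0 : q ≠ 0) (hn : 3 ≤ n)
    (θ : CWeyl K n q ≃ₐ[K] CWeyl K n q)
    (hθ : ∀ m : ℕ, 1 ≤ m → m < n → θ (Cgen K n q m) = Cgen K n q (m + 1)) :
    ∀ k : ℕ, k + 2 ≤ n →
      (Odd (k + 1) → q • (zsh (Cgen K n q) (k + 2) * θ (zsh (Cgen K n q) k)) -
          zsh (Cgen K n q) (k + 1) * θ (zsh (Cgen K n q) (k + 1)) =
          algebraMap K (CWeyl K n q) (-(q ^ (k / 2)))) ∧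
      (Even (k + 1) → zsh (Cgen K n q) (k + 2) * θ (zsh (Cgen K n q) k) -
          zsh (Cgen K n q) (k + 1) * θ (zsh (Cgen K n q) (k + 1)) =
          algebraMap K (CWeyl K n q) (-(q ^ ((k - 1) / 2)))) := by
  intro k
  induction k with
  | zero =>
    intro _
    constructor
    · intro _
      have h0 : zsh (Cgen K n q) 0 = 0 := rfl
      have h1 : zsh (Cgen K n q) (0 + 1) = 1 := rfl
      rw [h0, h1, map_zero, map_one, mul_zero, smul_zero, mul_one, zero_sub,
        Nat.zero_div, pow_zero, map_neg, map_one]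
    · intro h; rw [Nat.even_iff] at h; omega
  | succ k ih =>
    intro hb
    have IH := ih (by omega)
    show (Odd (k + 2) → q • (zsh (Cgen K n q) (k + 3) * θ (zsh (Cgen K n q) (k + 1))) -
          zsh (Cgen K n q) (k + 2) * θ (zsh (Cgen K n q) (k + 2)) =
          algebraMap K (CWeyl K n q) (-(q ^ ((k + 1) / 2)))) ∧
      (Even (k + 2) → zsh (Cgen K n q) (k + 3) * θ (zsh (Cgen K n q) (k + 1)) -
          zsh (Cgen K n q) (k + 2) * θ (zsh (Cgen K n q) (k + 2)) =
          algebraMap K (CWeyl K n q) (-(q ^ (k / 2))))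
    set P := zsh (Cgen K n q) (k + 2) with hP
    set R := zsh (Cgen K n q) (k + 1) with hR
    set y := Cgen K n q (k + 2) with hy
    set S := θ (zsh (Cgen K n q) (k + 1)) with hS
    set T := θ (zsh (Cgen K n q) k) with hT
    have hz3 : zsh (Cgen K n q) (k + 3) = P * y - R := rfl
    have hW : θ (zsh (Cgen K n q) (k + 2)) = S * y - T := by
      rw [show zsh (Cgen K n q) (k + 2)
            = zsh (Cgen K n q) (k + 1) * Cgen K n q (k + 1) - zsh (Cgen K n q) k from rfl,
        map_sub, map_mul, hθ (k + 1) (by omega) (by omega),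
        show k + 1 + 1 = k + 2 from rfl]
    constructor
    · -- Odd (k + 2) : k odd
      intro hko
      have hkodd : Odd k := by rw [Nat.odd_iff] at hko ⊢; omega
      have IHe := IH.2 (by rw [Nat.even_iff]; rw [Nat.odd_iff] at hkodd; omega)
      have hA := (lemA (K := K) (n := n) (q := q) hq0 k (by omega)).2 hkodd
      have θA : q • (y * S) = S * y - (1 - q) • T := by
        have := congrArg θ hA
        simp only [map_smul, map_mul, map_sub, hθ (k + 1) (by omega) (by omega),
          show k + 1 + 1 = k + 2 from rfl] at this
        exact this
      have e1 : q • (P * (y * S)) = P * (S * y) - (1 - q) • (P * T) := by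
        rw [← mul_smul_comm, θA, mul_sub, mul_smul_comm]
      rw [hz3, hW, sub_mul, mul_assoc, smul_sub, e1, mul_sub]
      have combine : P * (S * y) - (1 - q) • (P * T) - q • (R * S) - (P * (S * y) - P * T)
          = q • (P * T - R * S) := by module
      rw [combine, IHe, Algebra.smul_def, ← map_mul]
      congr 1
      have hk2 : k % 2 = 1 := Nat.odd_iff.mp hkodd
      rw [show (k + 1) / 2 = (k - 1) / 2 + 1 from by omega, pow_succ]
      ring
    · -- Even (k + 2) : k even
      intro hke
      have hkeven : Even k := by rw [Nat.even_iff] at hke ⊢; omega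
      have IHo := IH.1 (by rw [Nat.odd_iff]; rw [Nat.even_iff] at hkeven; omega)
      have hA := (lemA (K := K) (n := n) (q := q) hq0 k (by omega)).1 hkeven
      have θA : y * S = S * y - (1 - q) • T := by
        have := congrArg θ hA
        simp only [map_smul, map_mul, map_sub, hθ (k + 1) (by omega) (by omega),
          show k + 1 + 1 = k + 2 from rfl] at this
        exact this
      have e1 : P * (y * S) = P * (S * y) - (1 - q) • (P * T) := by
        rw [← mul_assoc, mul_assoc, θA, mul_sub, mul_smul_comm]
      rw [hz3, hW, sub_mul, mul_assoc, e1, mul_sub]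
      calc P * (S * y) - (1 - q) • (P * T) - R * S - (P * (S * y) - P * T)
          = q • (P * T) - R * S := by module
        _ = algebraMap K (CWeyl K n q) (-(q ^ (k / 2))) := IHo

end Aux2

/-- Lemma 4.4: in `C_n^q`, for `1 ≤ i ≤ n-1`:
`q z_i θ(z_{i-2}) - z_{i-1} θ(z_{i-1}) = -q^{(i-1)/2}` if `i` is odd, and
`z_i θ(z_{i-2}) - z_{i-1} θ(z_{i-1}) = -q^{(i-2)/2}` if `i` is even.
(Here `zsh x (k+1) = z_k`, in particular `zsh x 0 = z_{-1} = 0`.) -/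
theorem stmt12 (K : Type) [Field K] [IsAlgClosed K] (n : ℕ) (hn : 3 ≤ n) (hodd : Odd n)
    (q : K) (hq0 : q ≠ 0)
    (θ : CWeyl K n q ≃ₐ[K] CWeyl K n q)
    (hθ : ∀ m : ℕ, 1 ≤ m → m < n → θ (Cgen K n q m) = Cgen K n q (m + 1))
    (hθn : θ (Cgen K n q n) = Cgen K n q 1) :
    let x : ℕ → CWeyl K n q := Cgen K n q
    ∀ i : ℕ, 1 ≤ i → i ≤ n - 1 →
      (Odd i →
        q • (zsh x (i + 1) * θ (zsh x (i - 1))) - zsh x i * θ (zsh x i) =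
          algebraMap K (CWeyl K n q) (-(q ^ ((i - 1) / 2)))) ∧
      (Even i →
        zsh x (i + 1) * θ (zsh x (i - 1)) - zsh x i * θ (zsh x i) =
          algebraMap K (CWeyl K n q) (-(q ^ ((i - 2) / 2)))) := by
  intro x i hi1 hi2
  obtain ⟨k, rfl⟩ : ∃ k, i = k + 1 := ⟨i - 1, by omega⟩
  exact main44 hq0 hn θ hθ k (by omega)

end
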